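/- arXiv:2310.11897 — 3 statements merged into one kernel-verified Lean document; each statement's English description precedes it below -/
import Mathlib

section
/- Under softmax parameterization in one state with action set A = {1, …, n} where action 1 is distinguished, fix a direction d ∈ ℝⁿ with ‖d‖ = 1 and d₁ > d_i for all i ≠ 1. If θ ∈ ℝⁿ satisfies θ₁ − θ_i > M_d for all i ≠ 1, where M_d = 2·max_{i ≠ 1} ( ln(2(n−1)) − ln(d₁ − d_i) ), then for each fixed i ≠ 1 the second derivative at k = 0 of the function k ↦ exp(θ_i + k d_i) / ∑_{j=1}^n exp(θ_j + k d_j) is nonnegative. -/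
/-!
With `e j = d j - d i`, the probability of action `i` is `1 / g` for
`g k = ∑ j, exp (θ j - θ i + k * e j)`, so its second derivative at `0` is
`(2 A² - W B) / W³`, where `W`, `A`, `B` are the sums of `1`, `e`, `e²` against the weights
`exp (θ j - θ i)`. The margin makes the weight of the distinguished action exceed every other
weight by the factor `4 (n - 1)² / ((d₀ - d a) (d₀ - d b))`, so `W`, `A`, `B` equal their
distinguished terms up to relative errors of order `1 / (n - 1)`. Collecting these errors,
`2 A² ≥ W B` reduces to `q (2q - 3)² + 1 ≥ 0` for `q = n - 1`.
-/

open Real Finset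

theorem iteratedDeriv_two_inv {g g' g'' : ℝ → ℝ} (hg : ∀ x, HasDerivAt g (g' x) x)
    (hg' : ∀ x, HasDerivAt g' (g'' x) x) (hne : ∀ x, g x ≠ 0) (x : ℝ) :
    iteratedDeriv 2 (fun x => (g x)⁻¹) x = (2 * g' x ^ 2 - g x * g'' x) / g x ^ 3 := by
  have hderiv : deriv (fun x => (g x)⁻¹) = fun x => -g' x / g x ^ 2 :=
    funext fun x => ((hg x).inv (hne x)).deriv
  have hderiv' := ((hg' x).neg).div ((hg x).pow 2) (pow_ne_zero 2 (hne x))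
  rw [iteratedDeriv_succ, iteratedDeriv_one, hderiv]
  refine hderiv'.deriv.trans ?_
  simp only [Pi.neg_apply, Pi.pow_apply]
  have hgx := hne x
  field_simp
  ring

theorem iteratedDeriv_two_inv_sum_exp {ι : Type*} [Fintype ι] [Nonempty ι] (a e : ι → ℝ) :
    iteratedDeriv 2 (fun k => (∑ j, exp (a j + k * e j))⁻¹) 0 =
      (2 * (∑ j, exp (a j) * e j) ^ 2 - (∑ j, exp (a j)) * ∑ j, exp (a j) * e j ^ 2) /
        (∑ j, exp (a j)) ^ 3 := by
  have hterm : ∀ j k, HasDerivAt (fun k => exp (a j + k * e j)) (exp (a j + k * e j) * e j) k :=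
    fun j k => by simpa using (((hasDerivAt_id k).mul_const (e j)).const_add (a j)).exp
  rw [iteratedDeriv_two_inv (g' := fun k => ∑ j, exp (a j + k * e j) * e j)
      (g'' := fun k => ∑ j, exp (a j + k * e j) * e j * e j)
      (fun k => HasDerivAt.fun_sum fun j _ => hterm j k)
      (fun k => HasDerivAt.fun_sum fun j _ => (hterm j k).mul_const (e j))
      (fun k => (sum_pos (fun j _ => exp_pos _) univ_nonempty).ne')]
  simp only [zero_mul, add_zero, mul_assoc, ← sq]

theorem exp_div_sum_exp_eq_inv_sum_exp {ι : Type*} [Fintype ι] (θ d : ι → ℝ) (i : ι)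
    (k : ℝ) :
    exp (θ i + k * d i) / ∑ j, exp (θ j + k * d j) =
      (∑ j, exp (θ j - θ i + k * (d j - d i)))⁻¹ := by
  rw [← inv_div, sum_div]
  congr 1
  refine sum_congr rfl fun j _ => ?_
  rw [← exp_sub]
  ring_nf

theorem sq_sub_le_two_of_sum_sq_eq_one {ι : Type*} [Fintype ι] {d : ι → ℝ}
    (h : ∑ j, d j ^ 2 = 1) (j k : ι) : (d j - d k) ^ 2 ≤ 2 := by
  classical
  rcases eq_or_ne j k with rfl | hjk
  · norm_num
  have hpair : d j ^ 2 + d k ^ 2 ≤ 1 :=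
    calc d j ^ 2 + d k ^ 2 = ∑ l ∈ {j, k}, d l ^ 2 := by rw [sum_pair hjk]
      _ ≤ ∑ l, d l ^ 2 := sum_le_univ_sum_of_nonneg fun l => sq_nonneg (d l)
      _ = 1 := h
  nlinarith [sq_nonneg (d j + d k)]

theorem mul_exp_neg_le_of_log_sub_log_le {p c X : ℝ} (hp : 0 < p) (hc : 0 < c)
    (h : log p - log c ≤ X) : p * exp (-X) ≤ c := by
  have : exp (-X) ≤ c / p := by
    rw [← exp_log hc, ← exp_log hp, ← exp_sub]
    exact exp_le_exp.2 (by linarith)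
  rwa [le_div_iff₀' hp] at this

theorem sq_mul_exp_le_mul_of_margin {p ca cb X x : ℝ} (hp : 0 < p) (hca : 0 < ca) (hcb : 0 < cb)
    (ha : log p - log ca ≤ X) (hb : log p - log cb ≤ X) (hx : x ≤ -(2 * X)) :
    p ^ 2 * exp x ≤ ca * cb :=
  calc p ^ 2 * exp x ≤ p ^ 2 * exp (-(2 * X)) := by gcongr
    _ = (p * exp (-X)) * (p * exp (-X)) := by
      rw [mul_mul_mul_comm, ← exp_add, ← sq]; congr 2; ring
    _ ≤ ca * cb := mul_le_mul (mul_exp_neg_le_of_log_sub_log_le hp hca ha)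
        (mul_exp_neg_le_of_log_sub_log_le hp hcb hb) (by positivity) hca.le

theorem mul_le_two_mul_sq_of_dominant {w c q RA RB RW : ℝ} (hw : 0 ≤ w) (hc : 0 ≤ c)
    (hq : 1 ≤ q) (hRB : 0 ≤ RB) (hA : 2 * q ^ 2 * -RA ≤ (q - 1) * (w * c))
    (hB : 2 * q ^ 2 * RB ≤ (q - 1) * (w * c ^ 2)) (hW : 2 * q * RW ≤ w) :
    (w + RW) * (w * c ^ 2 + RB) ≤ 2 * (w * c + RA) ^ 2 := by
  have hq0 : 0 < q := by linarith
  have h1 := mul_le_mul_of_nonneg_left hA (by positivity : 0 ≤ 8 * q * (w * c))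
  have h2 := mul_le_mul_of_nonneg_left hB (by positivity : 0 ≤ 2 * q * w)
  have h3 := mul_le_mul_of_nonneg_left hW (by positivity : 0 ≤ 2 * q ^ 2 * (w * c ^ 2))
  have h4 := mul_le_mul_of_nonneg_left hW (by positivity : 0 ≤ 2 * q ^ 2 * RB)
  have h5 := mul_le_mul_of_nonneg_left hB (by positivity : 0 ≤ w)
  have hpoly : 0 ≤ q * (2 * q - 3) ^ 2 + 1 := by positivity
  suffices 0 ≤ 4 * q ^ 3 * (2 * (w * c + RA) ^ 2 - (w + RW) * (w * c ^ 2 + RB)) by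
    nlinarith [pow_pos hq0 3]
  nlinarith [mul_nonneg hpoly (sq_nonneg (w * c)), mul_nonneg (pow_pos hq0 3).le (sq_nonneg RA)]

theorem sum_mul_sum_mul_sq_le_two_mul_sq_sum_mul {ι : Type*} [Fintype ι] [DecidableEq ι]
    {o i : ι} (hi : i ≠ o) (w d : ι → ℝ) (hw : ∀ j, 0 < w j) (hd : ∀ j ≠ o, d j < d o)
    (hpair : ∀ j k, (d j - d k) ^ 2 ≤ 2)
    (hmargin : ∀ j ≠ o, ∀ a ≠ o, ∀ b ≠ o,
      4 * ((Fintype.card ι : ℝ) - 1) ^ 2 * w j ≤ w o * ((d o - d a) * (d o - d b))) :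
    (∑ j, w j) * ∑ j, w j * (d j - d i) ^ 2 ≤ 2 * (∑ j, w j * (d j - d i)) ^ 2 := by
  set q : ℝ := Fintype.card ι - 1
  set J := (univ.erase o).erase i
  have hiE : i ∈ univ.erase o := mem_erase.2 ⟨hi, mem_univ i⟩
  have hJ : (#J : ℝ) = q - 1 := by
    have h2 : 1 < Fintype.card ι := Fintype.one_lt_card_iff.2 ⟨i, o, hi⟩
    have : #J + 2 = Fintype.card ι := by
      rw [card_erase_of_mem hiE, card_erase_of_mem (mem_univ o), card_univ]
      omega
    have : (#J : ℝ) + 2 = Fintype.card ι := by exact_mod_cast this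
    linarith
  have hq1 : 1 ≤ q := by linarith [(#J).cast_nonneg (α := ℝ)]
  have hne : ∀ j ∈ J, j ≠ o := fun j hj => (mem_erase.1 (mem_of_mem_erase hj)).1
  have hsplit : ∀ f : ι → ℝ, ∑ j, f j = f o + (f i + ∑ j ∈ J, f j) := fun f => by
    rw [← add_sum_erase _ _ (mem_univ o), ← add_sum_erase _ _ hiE]
  have hsumJ : ∀ (f : ι → ℝ) (b : ℝ), (∀ j ∈ J, f j ≤ b) →
      ∑ j ∈ J, f j ≤ (q - 1) * b :=
    fun f b h => by simpa [nsmul_eq_mul, hJ] using sum_le_card_nsmul J f b h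
  have hc : 0 < d o - d i := sub_pos.2 (hd i hi)
  have hdom : ∀ j ≠ o, 2 * q ^ 2 * w j ≤ w o := fun j hj => by
    nlinarith [hmargin j hj j hj j hj, hpair o j, hw o]
  rw [hsplit, hsplit fun j => w j * (d j - d i) ^ 2, hsplit fun j => w j * (d j - d i)]
  simp only [sub_self, ne_eq, OfNat.ofNat_ne_zero, not_false_eq_true, zero_pow, mul_zero,
    zero_add]
  apply mul_le_two_mul_sq_of_dominant (hw o).le hc.le hq1
    (sum_nonneg fun j _ => mul_nonneg (hw j).le (sq_nonneg _))
  · rw [← sum_neg_distrib, mul_sum]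
    refine hsumJ _ _ fun j hj => ?_
    have hcj : 0 < d o - d j := sub_pos.2 (hd j (hne j hj))
    have hwc : 0 ≤ w o * (d o - d i) := (mul_pos (hw o) hc).le
    nlinarith [mul_le_mul_of_nonneg_right (hmargin j (hne j hj) i hi j (hne j hj)) hcj.le,
      mul_le_mul_of_nonneg_left (hpair o j) hwc,
      mul_nonneg (mul_nonneg (sq_nonneg q) (hw j).le) hc.le]
  · rw [mul_sum]
    refine hsumJ _ _ fun j hj => ?_
    have hwj : 0 ≤ 2 * q ^ 2 * w j := by have := hw j; positivity
    nlinarith [hmargin j (hne j hj) i hi i hi, mul_le_mul_of_nonneg_left (hpair j i) hwj]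
  · have hq0 : 0 < q := by linarith
    have hJsum := hsumJ (fun j => 2 * q ^ 2 * w j) (w o) fun j hj => hdom j (hne j hj)
    rw [← mul_sum] at hJsum
    nlinarith [hdom i hi]

/-- Softmax local convexity of non-optimal action probabilities along a
feasible direction, at parameters with dominating optimal logit. -/
theorem stmt_2 {n : ℕ} (hn : 2 ≤ n) (θ d : Fin n → ℝ)
    (hd_norm : Real.sqrt (∑ i, d i ^ 2) = 1)
    (hd : ∀ i : Fin n, i ≠ ⟨0, by omega⟩ → d ⟨0, by omega⟩ > d i)
    (Md : ℝ)
    (hMd : Md = 2 * (Finset.univ.erase (⟨0, by omega⟩ : Fin n)).sup'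
      (by
        refine Finset.nonempty_iff_ne_empty.mpr ?_
        intro hcontra
        have h1 : (⟨1, by omega⟩ : Fin n) ∈ Finset.univ.erase (⟨0, by omega⟩ : Fin n) := by
          refine Finset.mem_erase.mpr ⟨?_, Finset.mem_univ _⟩
          intro h; exact absurd (congrArg Fin.val h) (by simp)
        simp [hcontra] at h1)
      (fun i => Real.log (2 * (n - 1)) - Real.log (d ⟨0, by omega⟩ - d i)))
    (hθ : ∀ i : Fin n, i ≠ ⟨0, by omega⟩ → θ ⟨0, by omega⟩ - θ i > Md)
    (i : Fin n) (hi : i ≠ ⟨0, by omega⟩) :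
    0 ≤ iteratedDeriv 2
      (fun k : ℝ => Real.exp (θ i + k * d i) / ∑ j, Real.exp (θ j + k * d j)) 0 := by
  set o : Fin n := ⟨0, by omega⟩
  have hq : (0 : ℝ) < 2 * (n - 1) := by
    have : (2 : ℝ) ≤ n := by exact_mod_cast hn
    linarith
  have hsup : ∀ a ≠ o, log (2 * (n - 1)) - log (d o - d a) ≤ Md / 2 := fun a ha => by
    have := le_sup' (fun a => log (2 * (n - 1)) - log (d o - d a))
      (mem_erase.2 ⟨ha, mem_univ a⟩)
    rw [hMd]
    linarith
  have hmargin : ∀ j ≠ o, ∀ a ≠ o, ∀ b ≠ o, 4 * ((Fintype.card (Fin n) : ℝ) - 1) ^ 2 *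
      exp (θ j - θ i) ≤ exp (θ o - θ i) * ((d o - d a) * (d o - d b)) := by
    intro j hj a ha b hb
    have h := sq_mul_exp_le_mul_of_margin hq (sub_pos.2 (hd a ha)) (sub_pos.2 (hd b hb))
      (hsup a ha) (hsup b hb) (x := θ j - θ o) (by linarith [hθ j hj])
    calc 4 * ((Fintype.card (Fin n) : ℝ) - 1) ^ 2 * exp (θ j - θ i)
        = exp (θ o - θ i) * ((2 * (n - 1)) ^ 2 * exp (θ j - θ o)) := by
          rw [Fintype.card_fin, mul_left_comm, ← exp_add]; ring_nf
      _ ≤ _ := mul_le_mul_of_nonneg_left h (exp_pos _).le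
  have hcore := sum_mul_sum_mul_sq_le_two_mul_sq_sum_mul hi (fun j => exp (θ j - θ i)) d
    (fun j => exp_pos _) hd (sq_sub_le_two_of_sum_sq_eq_one (sqrt_eq_one.1 hd_norm)) hmargin
  have : Nonempty (Fin n) := ⟨o⟩
  simp_rw [exp_div_sum_exp_eq_inv_sum_exp θ d i, iteratedDeriv_two_inv_sum_exp]
  exact div_nonneg (by linarith) (by positivity)
end

section
/- In a finite MDP, if V^*(ρ) − V^π(ρ) and V^*(μ) − V^π(μ) denote suboptimality gaps under two starting distributions ρ and μ, then V^*(ρ) − V^π(ρ) ≤ (1/(1−γ))·‖d^{π*}_ρ/μ‖_∞·(V^*(μ) − V^π(μ)) for any policy π, where ‖d^{π*}_ρ/μ‖_∞ = max_s d^{π*}_ρ(s)/μ(s). -/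
/-- Distribution-mismatch bound on the suboptimality gap. Here `g s` abbreviates
`∑_a π*(a|s) A^π(s,a)` (nonnegative since `π*` is optimal), `dρ` and `dμ` are the
discounted visitation distributions of `π*` started from `ρ` and `μ`, and the
performance difference lemma is assumed for both starting distributions. -/
theorem stmt_11 {S : Type*} [Fintype S] [Nonempty S]
    (γ : ℝ) (hγ0 : 0 ≤ γ) (hγ1 : γ < 1)
    (ρ μ : S → ℝ) (hρ0 : ∀ s, 0 ≤ ρ s) (hρ1 : ∑ s, ρ s = 1)
    (hμ0 : ∀ s, 0 < μ s) (hμ1 : ∑ s, μ s = 1)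
    (dρ dμ : S → ℝ) (hdρ0 : ∀ s, 0 ≤ dρ s)
    (hdμ : ∀ s, dμ s ≥ (1 - γ) * μ s)
    (g : S → ℝ) (hg : ∀ s, 0 ≤ g s)
    (Vstarρ Vπρ Vstarμ Vπμ : ℝ)
    (hpdρ : Vstarρ - Vπρ = (1 / (1 - γ)) * ∑ s, dρ s * g s)
    (hpdμ : Vstarμ - Vπμ = (1 / (1 - γ)) * ∑ s, dμ s * g s) :
    Vstarρ - Vπρ ≤ (1 / (1 - γ)) *
      (Finset.univ.sup' Finset.univ_nonempty (fun s => dρ s / μ s)) *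
      (Vstarμ - Vπμ) := by
  set C := Finset.univ.sup' Finset.univ_nonempty (fun s => dρ s / μ s) with hC
  have h1γ : (0:ℝ) < 1 - γ := by linarith
  have hC0 : 0 ≤ C := by
    obtain ⟨s⟩ := ‹Nonempty S›
    exact le_trans (div_nonneg (hdρ0 s) (hμ0 s).le)
      (Finset.le_sup' (fun s => dρ s / μ s) (Finset.mem_univ s))
  have hCs : ∀ s, dρ s ≤ C * μ s := by
    intro s
    have := Finset.le_sup' (fun s => dρ s / μ s) (Finset.mem_univ s)
    calc dρ s = dρ s / μ s * μ s := (div_mul_cancel₀ _ (hμ0 s).ne').symm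
    _ ≤ C * μ s := by exact mul_le_mul_of_nonneg_right this (hμ0 s).le
  have key : ∑ s, dρ s * g s ≤ C / (1 - γ) * ∑ s, dμ s * g s := by
    have h2 : ∑ s, dρ s * g s ≤ C * ∑ s, μ s * g s := by
      rw [Finset.mul_sum]
      exact Finset.sum_le_sum fun s _ =>
        mul_le_mul_of_nonneg_right (hCs s) (hg s) |>.trans_eq (mul_assoc _ _ _)
    have h3 : (1 - γ) * ∑ s, μ s * g s ≤ ∑ s, dμ s * g s := by
      rw [Finset.mul_sum]
      exact Finset.sum_le_sum fun s _ => by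
        rw [← mul_assoc]; exact mul_le_mul_of_nonneg_right (hdμ s) (hg s)
    calc ∑ s, dρ s * g s ≤ C * ∑ s, μ s * g s := h2
    _ ≤ C / (1 - γ) * ∑ s, dμ s * g s := by
        rw [div_mul_eq_mul_div, le_div_iff₀ h1γ]
        calc C * (∑ s, μ s * g s) * (1 - γ)
            = C * ((1 - γ) * ∑ s, μ s * g s) := by ring
        _ ≤ C * ∑ s, dμ s * g s := mul_le_mul_of_nonneg_left h3 hC0
  rw [hpdρ, hpdμ]
  have := mul_le_mul_of_nonneg_left key (by positivity : (0:ℝ) ≤ 1 / (1 - γ))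
  calc 1 / (1 - γ) * ∑ s, dρ s * g s
      ≤ 1 / (1 - γ) * (C / (1 - γ) * ∑ s, dμ s * g s) := this
  _ = 1 / (1 - γ) * C * (1 / (1 - γ) * ∑ s, dμ s * g s) := by ring
end

section
/- Consider one step of softmax gradient ascent on the value function: θ(s,a) = ω(s,a) + η·∂V^{π_ω}(μ)/∂ω(s,a), with η > 0. Then for every state s, ∑_a π_θ(a|s)·A^{π_ω}(s,a) ≥ 0; consequently (by the performance difference lemma) V^{π_θ}(s) ≥ V^{π_ω}(s) for every s. -/
/-- One step of softmax policy gradient ascent improves the value at every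
state. `θ = ω + η·∇V^{π_ω}(μ)` with the softmax policy gradient formula, and
the performance difference lemma (hypothesis `hpd`) transfers the per-state
expected-advantage inequality into value improvement. -/
theorem stmt_13 {S A : Type*} [Fintype S] [Fintype A]
    (γ : ℝ) (hγ0 : 0 ≤ γ) (hγ1 : γ < 1)
    (η : ℝ) (hη : 0 < η)
    (ω θ : S → A → ℝ)
    (dvis : S → ℝ) (hdvis : ∀ s, 0 ≤ dvis s)
    (Adv : S → A → ℝ)
    (πω πθ : S → A → ℝ)
    (hπω : ∀ s a, πω s a = Real.exp (ω s a) / ∑ a', Real.exp (ω s a'))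
    (hπθ : ∀ s a, πθ s a = Real.exp (θ s a) / ∑ a', Real.exp (θ s a'))
    (hAsum : ∀ s, ∑ a, πω s a * Adv s a = 0)
    (hupd : ∀ s a, θ s a = ω s a + η * ((1 / (1 - γ)) * dvis s * πω s a * Adv s a))
    (Vθ Vω : S → ℝ)
    (dθ : S → S → ℝ) (hdθ0 : ∀ s s', 0 ≤ dθ s s')
    (hpd : ∀ s, Vθ s - Vω s =
      (1 / (1 - γ)) * ∑ s', dθ s s' * ∑ a, πθ s' a * Adv s' a) :
    (∀ s, 0 ≤ ∑ a, πθ s a * Adv s a) ∧ (∀ s, Vω s ≤ Vθ s) := by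
  have hγ : (0:ℝ) < 1 - γ := by linarith
  have key : ∀ s, 0 ≤ ∑ a, πθ s a * Adv s a := by
    intro s
    rcases isEmpty_or_nonempty A with h | h
    · simp
    · have hZω : 0 < ∑ a', Real.exp (ω s a') :=
        Finset.sum_pos (fun a _ => Real.exp_pos _) Finset.univ_nonempty
      have hZθ : 0 < ∑ a', Real.exp (θ s a') :=
        Finset.sum_pos (fun a _ => Real.exp_pos _) Finset.univ_nonempty
      have hω0 : ∑ a, Real.exp (ω s a) * Adv s a = 0 := by
        have h2 : ∑ a, πω s a * Adv s a
            = (∑ a, Real.exp (ω s a) * Adv s a) / (∑ a', Real.exp (ω s a')) := by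
          rw [Finset.sum_div]
          exact Finset.sum_congr rfl fun a _ => by rw [hπω]; ring
        have := hAsum s
        rw [h2] at this
        rcases div_eq_zero_iff.mp this with h' | h'
        · exact h'
        · exact absurd h' hZω.ne'
      have hpt : ∀ a ∈ Finset.univ, Real.exp (ω s a) * Adv s a ≤ Real.exp (θ s a) * Adv s a := by
        intro a _
        have hπωnn : 0 ≤ πω s a := by rw [hπω]; positivity
        have hc : 0 ≤ η * ((1 / (1 - γ)) * dvis s * πω s a) := by
          apply mul_nonneg hη.le
          exact mul_nonneg (mul_nonneg (by positivity) (hdvis s)) hπωnn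
        set c := η * ((1 / (1 - γ)) * dvis s * πω s a) with hcdef
        have hθeq : θ s a = ω s a + c * Adv s a := by rw [hupd]; ring
        rcases le_or_gt 0 (Adv s a) with ht | ht
        · have : Real.exp (ω s a) ≤ Real.exp (θ s a) := by
            rw [hθeq]; exact Real.exp_le_exp.mpr (by nlinarith)
          exact mul_le_mul_of_nonneg_right this ht
        · have : Real.exp (θ s a) ≤ Real.exp (ω s a) := by
            rw [hθeq]; exact Real.exp_le_exp.mpr (by nlinarith)
          exact mul_le_mul_of_nonpos_right this ht.le
      have hθ0 : 0 ≤ ∑ a, Real.exp (θ s a) * Adv s a := by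
        calc (0:ℝ) = ∑ a, Real.exp (ω s a) * Adv s a := hω0.symm
        _ ≤ ∑ a, Real.exp (θ s a) * Adv s a := Finset.sum_le_sum hpt
      have h3 : ∑ a, πθ s a * Adv s a
          = (∑ a, Real.exp (θ s a) * Adv s a) / (∑ a', Real.exp (θ s a')) := by
        rw [Finset.sum_div]
        exact Finset.sum_congr rfl fun a _ => by rw [hπθ]; ring
      rw [h3]
      exact div_nonneg hθ0 hZθ.le
  refine ⟨key, fun s => ?_⟩
  have h4 : 0 ≤ (1 / (1 - γ)) * ∑ s', dθ s s' * ∑ a, πθ s' a * Adv s' a := by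
    apply mul_nonneg (by positivity)
    exact Finset.sum_nonneg fun s' _ => mul_nonneg (hdθ0 s s') (key s')
  have := hpd s
  linarith
end
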